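/- Fix a ∈ ℝ, a ≠ 0, and let G be the matrix group of all g(x₁,x₂,x₃,x₄) as above, with H₁ = { g(0,0,k,0) : k ∈ ℝ }. Then the core of H₁ in G is trivial: the only normal subgroup of G contained in H₁ is the trivial subgroup. -/

import Mathlib

noncomputable def g (a x₁ x₂ x₃ x₄ : ℝ) : Matrix (Fin 4) (Fin 4) ℝ :=
  !![Real.exp (a * x₄), 0, 0, x₁;
     0, Real.exp x₄, x₄ * Real.exp x₄, x₂;
     0, 0, Real.exp x₄, x₃;
     0, 0, 0, 1]

/-!
With rows and columns indexed from `0`, `g(0,0,k,0) = 1 + k E₂₃`, and conjugating it by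
`g(0,0,0,1)` gives `1 + k e (E₁₃ + E₂₃)`, whose `(1,3)` entry `k e` must vanish for the
conjugate to lie in `H₁`; hence `k = 0`.
-/

open Real

lemma g_zero (a : ℝ) : g a 0 0 0 0 = 1 := by
  ext i j
  fin_cases i <;> fin_cases j <;> simp [g]

lemma g_mul_g_neg (a t : ℝ) : g a 0 0 0 t * g a 0 0 0 (-t) = 1 := by
  ext i j
  fin_cases i <;> fin_cases j <;>
    simp [g, Matrix.mul_apply, Fin.sum_univ_four, exp_neg]; field_simp; ring

lemma inv_g (a t : ℝ) : (g a 0 0 0 t)⁻¹ = g a 0 0 0 (-t) :=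
  Matrix.inv_eq_right_inv (g_mul_g_neg a t)

lemma g_mul_g_swap (a t k : ℝ) :
    g a 0 0 0 t * g a 0 0 k 0 = g a 0 (t * exp t * k) (exp t * k) 0 * g a 0 0 0 t := by
  ext i j
  fin_cases i <;> fin_cases j <;> simp [g, Matrix.mul_apply, Fin.sum_univ_four]

lemma g_conj_g (a t k : ℝ) :
    g a 0 0 0 t * g a 0 0 k 0 * (g a 0 0 0 t)⁻¹ = g a 0 (t * exp t * k) (exp t * k) 0 := by
  rw [g_mul_g_swap, Matrix.mul_assoc, inv_g, g_mul_g_neg, Matrix.mul_one]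

theorem core_H1_trivial_general (a : ℝ) :
    ∀ S : Set (Matrix (Fin 4) (Fin 4) ℝ),
      S ⊆ {M | ∃ k : ℝ, M = g a 0 0 k 0} →
      (1 : Matrix (Fin 4) (Fin 4) ℝ) ∈ S →
      (∀ x ∈ S, ∀ y ∈ S, x * y ∈ S) →
      (∀ x ∈ S, x⁻¹ ∈ S) →
      (∀ P ∈ {M | ∃ x₁ x₂ x₃ x₄ : ℝ, M = g a x₁ x₂ x₃ x₄}, ∀ s ∈ S, P * s * P⁻¹ ∈ S) →
      S = {1} := by
  intro S hSsub hone _ _ hconj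
  refine Set.Subset.antisymm (fun x hx => ?_) (Set.singleton_subset_iff.mpr hone)
  obtain ⟨k, rfl⟩ := hSsub hx
  obtain ⟨m, hm⟩ := hSsub (hconj _ ⟨0, 0, 0, 1, rfl⟩ _ hx)
  rw [g_conj_g] at hm
  have hk : 1 * exp 1 * k = 0 := by simpa [g] using congrFun (congrFun hm 1) 3
  have hk0 : k = 0 := by simpa [exp_ne_zero] using hk
  rw [hk0, g_zero]
  exact Set.mem_singleton 1

theorem core_H1_trivial (a : ℝ) (ha : a ≠ 0) :
    ∀ S : Set (Matrix (Fin 4) (Fin 4) ℝ),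
      S ⊆ {M | ∃ k : ℝ, M = g a 0 0 k 0} →
      (1 : Matrix (Fin 4) (Fin 4) ℝ) ∈ S →
      (∀ x ∈ S, ∀ y ∈ S, x * y ∈ S) →
      (∀ x ∈ S, x⁻¹ ∈ S) →
      (∀ P ∈ {M | ∃ x₁ x₂ x₃ x₄ : ℝ, M = g a x₁ x₂ x₃ x₄}, ∀ s ∈ S, P * s * P⁻¹ ∈ S) →
      S = {1} :=
  core_H1_trivial_general a
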